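/- arXiv:2407.21223 — 3 statements merged into one kernel-verified Lean document; each statement's English description precedes it below -/
import Mathlib

section
/- Let d ≥ 1, ζ, γ ∈ ℝ, and define Σ : {1,…,d} × {1,…,d} → ℝ by Σ_{ij} = (γ/2)(ζ/2)^{i+j} ∑_{k=1}^{min(i,j)} (4/ζ²)^k · binom(i+j-2k, i-k) (for ζ ≠ 0). Then Σ_{i1} = Σ_{1i} = (γ/2)(ζ/2)^{i-1} for all i, and for all i, j > 1 the recursion Σ_{ij} = (ζ/2)Σ_{i-1,j} + (ζ/2)Σ_{i,j-1} + (γ/2)δ_{ij} holds, where δ_{ij} is the Kronecker delta. -/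
/-- The path-model covariance entries. -/
noncomputable def pathCov (ζ γ : ℝ) (i j : ℕ) : ℝ :=
  γ / 2 * (ζ / 2) ^ (i + j) *
    ∑ k ∈ Finset.Icc 1 (min i j), (4 / ζ ^ 2) ^ k * ((i + j - 2 * k).choose (i - k) : ℝ)

open Finset

private lemma S_symm (x : ℝ) (i j : ℕ) :
    ∑ k ∈ Icc 1 (min i j), x ^ k * ((i + j - 2 * k).choose (i - k) : ℝ)
  = ∑ k ∈ Icc 1 (min j i), x ^ k * ((j + i - 2 * k).choose (j - k) : ℝ) := by
  rw [min_comm]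
  refine Finset.sum_congr rfl fun k hk => ?_
  simp only [Finset.mem_Icc, min_le_iff] at hk
  have hki : k ≤ i := by omega
  have hkj : k ≤ j := by omega
  congr 1
  norm_cast
  have h1 : j + i - 2 * k = i + j - 2 * k := by omega
  have h2 : j - k = (i + j - 2 * k) - (i - k) := by omega
  rw [h1, h2, Nat.choose_symm (by omega)]

private lemma S_rec (x : ℝ) (i j : ℕ) (hi : 1 < i) (hij : i ≤ j) :
    ∑ k ∈ Icc 1 (min i j), x ^ k * ((i + j - 2 * k).choose (i - k) : ℝ)
  = (∑ k ∈ Icc 1 (min (i - 1) j), x ^ k * (((i - 1) + j - 2 * k).choose ((i - 1) - k) : ℝ))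
  + (∑ k ∈ Icc 1 (min i (j - 1)), x ^ k * ((i + (j - 1) - 2 * k).choose (i - k) : ℝ))
  + (if i = j then x ^ i else 0) := by
  have hmin1 : min i j = i := by omega
  have hmin2 : min (i - 1) j = i - 1 := by omega
  have hi1 : i = (i - 1) + 1 := by omega
  rw [hmin1, hmin2]
  have hsplit : ∑ k ∈ Icc 1 i, x ^ k * ((i + j - 2 * k).choose (i - k) : ℝ)
      = (∑ k ∈ Icc 1 (i - 1), x ^ k * ((i + j - 2 * k).choose (i - k) : ℝ))
        + x ^ i * ((i + j - 2 * i).choose (i - i) : ℝ) := by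
    conv_lhs => rw [hi1]
    rw [Finset.sum_Icc_succ_top (by omega)]
    rw [← hi1]
  rw [hsplit]
  have hterm : x ^ i * ((i + j - 2 * i).choose (i - i) : ℝ) = x ^ i := by
    simp [Nat.sub_self]
  rw [hterm]
  have hpascal : ∀ k ∈ Icc 1 (i - 1),
      x ^ k * ((i + j - 2 * k).choose (i - k) : ℝ)
      = x ^ k * (((i - 1) + j - 2 * k).choose ((i - 1) - k) : ℝ)
        + x ^ k * ((i + (j - 1) - 2 * k).choose (i - k) : ℝ) := by
    intro k hk
    simp only [Finset.mem_Icc] at hk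
    have h1 : i + j - 2 * k = ((i - 1) + j - 2 * k) + 1 := by omega
    have h2 : i - k = ((i - 1) - k) + 1 := by omega
    have h3 : i + (j - 1) - 2 * k = (i - 1) + j - 2 * k := by omega
    rw [h1, h2, h3, Nat.choose_succ_succ]
    push_cast
    ring
  rw [Finset.sum_congr rfl hpascal, Finset.sum_add_distrib]
  by_cases hij' : i = j
  · have hmin3 : min i (j - 1) = i - 1 := by omega
    rw [hmin3, if_pos hij']
  · have hlt : i < j := lt_of_le_of_ne hij hij'
    have hmin3 : min i (j - 1) = i := by omega
    rw [hmin3, if_neg hij']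
    have hsplit2 : ∑ k ∈ Icc 1 i, x ^ k * ((i + (j - 1) - 2 * k).choose (i - k) : ℝ)
        = (∑ k ∈ Icc 1 (i - 1), x ^ k * ((i + (j - 1) - 2 * k).choose (i - k) : ℝ))
          + x ^ i * ((i + (j - 1) - 2 * i).choose (i - i) : ℝ) := by
      conv_lhs => rw [hi1]
      rw [Finset.sum_Icc_succ_top (by omega)]
      rw [← hi1]
    rw [hsplit2]
    simp [Nat.sub_self]
    ring

/-- First row/column and recursion of the path-model covariance. -/
theorem pathCov_recursion (d : ℕ) (hd : 1 ≤ d) (ζ γ : ℝ) (hζ : ζ ≠ 0) :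
    (∀ i, 1 ≤ i → i ≤ d →
        pathCov ζ γ i 1 = γ / 2 * (ζ / 2) ^ (i - 1) ∧
        pathCov ζ γ 1 i = γ / 2 * (ζ / 2) ^ (i - 1)) ∧
      ∀ i j, 1 < i → 1 < j → i ≤ d → j ≤ d →
        pathCov ζ γ i j =
          ζ / 2 * pathCov ζ γ (i - 1) j + ζ / 2 * pathCov ζ γ i (j - 1) +
            γ / 2 * (if i = j then 1 else 0) := by
  have key : ∀ i, 1 ≤ i → (ζ / 2) ^ (i + 1) * (4 / ζ ^ 2) = (ζ / 2) ^ (i - 1) := by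
    intro i hi
    have : i + 1 = (i - 1) + 2 := by omega
    rw [this, pow_add]
    field_simp
    ring
  constructor
  · intro i hi hid
    constructor
    · unfold pathCov
      have hmin : min i 1 = 1 := by omega
      rw [hmin]
      have : i + 1 - 2 * 1 = i - 1 := by omega
      rw [Finset.Icc_self, Finset.sum_singleton, this, Nat.choose_self]
      rw [show ((1 : ℕ) : ℝ) = 1 by norm_num]
      rw [pow_one, mul_one, mul_assoc, key i hi]
    · unfold pathCov
      have hmin : min 1 i = 1 := by omega
      rw [hmin]
      have h1 : 1 + i - 2 * 1 = i - 1 := by omega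
      have h2 : 1 - 1 = 0 := rfl
      rw [Finset.Icc_self, Finset.sum_singleton, h1, h2, Nat.choose_zero_right]
      rw [show ((1 : ℕ) : ℝ) = 1 by norm_num]
      rw [pow_one, mul_one, mul_assoc, show 1 + i = i + 1 by ring, key i (by omega)]
  · intro i j hi hj hid hjd
    have hone : ((ζ / 2) ^ 2 * (4 / ζ ^ 2)) = 1 := by field_simp; ring
    have hSrec : ∑ k ∈ Icc 1 (min i j), (4 / ζ ^ 2) ^ k * ((i + j - 2 * k).choose (i - k) : ℝ)
        = (∑ k ∈ Icc 1 (min (i - 1) j),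
            (4 / ζ ^ 2) ^ k * (((i - 1) + j - 2 * k).choose ((i - 1) - k) : ℝ))
        + (∑ k ∈ Icc 1 (min i (j - 1)),
            (4 / ζ ^ 2) ^ k * ((i + (j - 1) - 2 * k).choose (i - k) : ℝ))
        + (if i = j then (4 / ζ ^ 2) ^ min i j else 0) := by
      rcases le_or_gt i j with h | h
      · rw [S_rec (4 / ζ ^ 2) i j hi h, min_eq_left h]
      · rw [S_symm, S_rec (4 / ζ ^ 2) j i hj h.le, min_eq_right h.le]
        rw [S_symm (4 / ζ^2) (j-1) i, S_symm (4 / ζ^2) j (i-1)]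
        have : ¬ j = i := by omega
        have : ¬ i = j := by omega
        simp [*]
        ring
    unfold pathCov
    rw [hSrec]
    have e1 : (ζ / 2) ^ (i + j) = (ζ / 2) * (ζ / 2) ^ ((i - 1) + j) := by
      rw [← pow_succ']
      congr 1
      omega
    have e2 : (ζ / 2) ^ (i + j) = (ζ / 2) * (ζ / 2) ^ (i + (j - 1)) := by
      rw [← pow_succ']
      congr 1
      omega
    by_cases hij : i = j
    · subst hij
      rw [if_pos rfl, if_pos rfl, min_self]
      have e3 : (ζ / 2) ^ (i + i) * (4 / ζ ^ 2) ^ i = 1 := by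
        rw [show i + i = 2 * i by ring, pow_mul, ← mul_pow, hone, one_pow]
      linear_combination
        (γ / 2 * ∑ k ∈ Icc 1 (min (i - 1) i),
          (4 / ζ ^ 2) ^ k * (((i - 1) + i - 2 * k).choose ((i - 1) - k) : ℝ)) * e1
        + (γ / 2 * ∑ k ∈ Icc 1 (min i (i - 1)),
          (4 / ζ ^ 2) ^ k * ((i + (i - 1) - 2 * k).choose (i - k) : ℝ)) * e2
        + γ / 2 * e3
    · rw [if_neg hij, if_neg hij]
      linear_combination
        (γ / 2 * ∑ k ∈ Icc 1 (min (i - 1) j),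
          (4 / ζ ^ 2) ^ k * (((i - 1) + j - 2 * k).choose ((i - 1) - k) : ℝ)) * e1
        + (γ / 2 * ∑ k ∈ Icc 1 (min i (j - 1)),
          (4 / ζ ^ 2) ^ k * ((i + (j - 1) - 2 * k).choose (i - k) : ℝ)) * e2
end

section
/- Define Σ_{ij} = ∑_{k=1}^{min(i,j)} binom(i+j-2k, i-k) for positive integers i, j. Then Σ_{i1} = Σ_{1i} = 1 for all i ≥ 1, and for i, j ≥ 2, Σ_{ij} = Σ_{i-1,j} + Σ_{i,j-1} + δ_{ij}, where δ_{ij} is the Kronecker delta. -/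
/-!
Peeling off the term `k = 1` gives `Σ_{i+1,j+1} = binom(i+j, i) + Σ_{i,j}`, and `Σ` vanishes on the
zeroth row and column. Applied to `Σ_{i+2,j+2}`, `Σ_{i+1,j+2}` and `Σ_{i+2,j+1}`, this reduces the
recursion at `(i+2, j+2)` to Pascal's rule for `binom(i+j+2, i+1)` plus the recursion at
`(i+1, j+1)`. So the recursion holds for all `Σ_{i+1,j+1}` by induction, starting from the zeroth
row and column, where the Kronecker delta only contributes `Σ_{1,1} = 1`.
-/

/-- The path-model covariance entries with `ζ = γ = 2`. -/
def pascalCov (i j : ℕ) : ℕ :=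
  ∑ k ∈ Finset.Icc 1 (min i j), (i + j - 2 * k).choose (i - k)

theorem Finset.sum_Icc_one_succ {M : Type*} [AddCommMonoid M] (f : ℕ → M) (n : ℕ) :
    ∑ k ∈ Icc 1 (n + 1), f k = f 1 + ∑ k ∈ Icc 1 n, f (k + 1) := by
  simp only [← Finset.Ico_add_one_right_eq_Icc, Finset.sum_Ico_eq_sum_range,
    Nat.add_sub_cancel, Finset.sum_range_succ']
  simp [add_comm, add_left_comm]

namespace pascalCov

@[simp]
theorem zero_left (j : ℕ) : pascalCov 0 j = 0 := by
  simp [pascalCov]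

@[simp]
theorem zero_right (i : ℕ) : pascalCov i 0 = 0 := by
  simp [pascalCov]

theorem succ_succ (i j : ℕ) : pascalCov (i + 1) (j + 1) = (i + j).choose i + pascalCov i j := by
  rw [pascalCov, min_add_add_right, Finset.sum_Icc_one_succ, pascalCov]
  congr 1
  · congr 1; omega
  · refine Finset.sum_congr rfl fun k _ => ?_
    congr 1 <;> omega

@[simp]
theorem one_succ (j : ℕ) : pascalCov 1 (j + 1) = 1 := by
  simpa using succ_succ 0 j

@[simp]
theorem succ_one (i : ℕ) : pascalCov (i + 1) 1 = 1 := by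
  simpa using succ_succ i 0

theorem succ_succ_eq_add (i j : ℕ) :
    pascalCov (i + 1) (j + 1) =
      pascalCov i (j + 1) + pascalCov (i + 1) j + if i = j then 1 else 0 := by
  induction i generalizing j with
  | zero => cases j <;> simp
  | succ i ih =>
    cases j with
    | zero => simp
    | succ j =>
      rw [succ_succ (i + 1), succ_succ i (j + 1), succ_succ (i + 1) j, ih j,
        show i + 1 + (j + 1) = (i + j + 1) + 1 by ring, Nat.choose_succ_succ',
        show i + (j + 1) = i + j + 1 by ring]
      simp only [Nat.add_right_cancel_iff, show i + 1 + j = i + j + 1 by ring]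
      ring

end pascalCov

/-- First row/column and recursion of the `ζ = γ = 2` path-model covariance. -/
theorem pascalCov_recursion :
    (∀ i, 1 ≤ i → pascalCov i 1 = 1 ∧ pascalCov 1 i = 1) ∧
      ∀ i j, 2 ≤ i → 2 ≤ j →
        pascalCov i j =
          pascalCov (i - 1) j + pascalCov i (j - 1) + (if i = j then 1 else 0) := by
  refine ⟨fun i hi => ?_, fun i j hi hj => ?_⟩
  · obtain ⟨i, rfl⟩ := Nat.exists_eq_add_of_le' hi
    simp
  · obtain ⟨i, rfl⟩ := Nat.exists_eq_add_of_le' (one_le_two.trans hi)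
    obtain ⟨j, rfl⟩ := Nat.exists_eq_add_of_le' (one_le_two.trans hj)
    simpa using pascalCov.succ_succ_eq_add i j
end

section
/- Let M be a d×d lower triangular real matrix with M_{ii} ∈ [-1, 0) for all i and M_{ij} ≥ 0 for j < i, and let C be a diagonal positive semidefinite d×d matrix. Then M is stable, and the unique solution Σ of MΣ + ΣMᵀ + C = 0 satisfies Σ_{dd} ≥ −C_{dd}/(2 M_{dd}) + (1/2) ∑_{i=1}^{d-1} ∑_{j=1}^{d-1} M_{di} M_{dj} Σ_{ij}. -/
/-!
Entry `(i, j)` of the Lyapunov equation `M Σ + Σ Mᵀ + C = 0` reads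
`(M_ii + M_jj) Σ_ij = -C_ij - ∑_{k<i} M_ik Σ_kj - ∑_{k<j} M_jk Σ_ik`, so when `M` is lower
triangular with negative diagonal and nonnegative off-diagonal part and `C ≥ 0`, induction on
`(i, j)` shows that every solution is entrywise nonnegative. Applied to differences of
solutions this gives uniqueness, hence symmetry of `Σ`.

Let `m` be the last row of `M` with its diagonal entry `a = M_dd` replaced by `0`. Entry `(d, d)`
gives `Σ_dd = (C_dd + 2 (Σ m)_d) / (-2a)`, and entry `(k, d)` for `k < d` gives
`(Σ m)_k ≤ -(M_kk + a) Σ_kd ≤ 2 Σ_kd`; hence `mᵀ Σ m ≤ 2 (Σ m)_d`, and `-a ≤ 1` finishes.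
Stability holds because the eigenvalues of a triangular matrix are its diagonal entries.
-/

open Matrix

namespace Matrix

theorem IsLowerTriangular.exists_diag_eq_of_mem_spectrum {ι K : Type*} [Fintype ι]
    [DecidableEq ι] [LinearOrder ι] [Field K] {A : Matrix ι ι K} (hA : A.IsLowerTriangular) {μ : K}
    (hμ : μ ∈ spectrum K A) : ∃ i, A i i = μ := by
  have hAt : Aᵀ.IsUpperTriangular := fun i j h => hA h
  rw [mem_spectrum_iff_isRoot_charpoly, ← charpoly_transpose,
    charpoly_of_isUpperTriangular _ hAt, Polynomial.isRoot_prod] at hμ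
  obtain ⟨i, -, hi⟩ := hμ
  exact ⟨i, (sub_eq_zero.mp (by simpa using hi)).symm⟩

section OffDiagRow

variable {ι R : Type*} [DecidableEq ι]

def offDiagRow [Zero R] (M : Matrix ι ι R) (p : ι) : ι → R := Function.update (M p) p 0

theorem offDiagRow_add_single [AddZeroClass R] (M : Matrix ι ι R) (p : ι) :
    offDiagRow M p + Pi.single p (M p p) = M p := by
  ext l
  rcases eq_or_ne l p with rfl | hl <;> simp [offDiagRow, *]

theorem mulVec_row_eq_mulVec_offDiagRow_add [Fintype ι] [CommSemiring R] (M S : Matrix ι ι R)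
    (p k : ι) :
    (S *ᵥ M p) k = (S *ᵥ offDiagRow M p) k + S k p * M p p := by
  conv_lhs => rw [← offDiagRow_add_single M p]
  simp [mulVec_add, mul_comm]

end OffDiagRow

theorem offDiagRow_last_dotProduct_mulVec {R : Type*} [CommSemiring R] {n : ℕ}
    (M S : Matrix (Fin (n + 1)) (Fin (n + 1)) R) :
    offDiagRow M (Fin.last n) ⬝ᵥ S *ᵥ offDiagRow M (Fin.last n) =
      ∑ i : Fin n, ∑ j : Fin n, M (Fin.last n) i.castSucc * M (Fin.last n) j.castSucc *
        S i.castSucc j.castSucc := by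
  simp only [offDiagRow, dotProduct, mulVec, Fin.sum_univ_castSucc, Function.update_self,
    Function.update_of_ne (Fin.castSucc_ne_last _), zero_mul, mul_zero, Finset.sum_const_zero,
    add_zero, Finset.mul_sum]
  exact Finset.sum_congr rfl fun i _ => Finset.sum_congr rfl fun j _ => by ring

section LowerTriangular

variable {ι R : Type*} [LinearOrder ι] [Zero R] {M : Matrix ι ι R}

theorem offDiagRow_eq_zero_of_le (hM : M.IsLowerTriangular) {p k : ι} (h : p ≤ k) :
    offDiagRow M p k = 0 := by
  rcases h.eq_or_lt with rfl | hpk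
  · simp [offDiagRow]
  · simp [offDiagRow, hpk.ne', hM (show OrderDual.toDual k < OrderDual.toDual p from hpk)]

theorem offDiagRow_nonneg [Preorder R] (hM : M.IsLowerTriangular)
    (hoff : ∀ i j, j < i → 0 ≤ M i j) (p k : ι) : 0 ≤ offDiagRow M p k := by
  rcases lt_or_ge k p with hkp | hpk
  · simpa [offDiagRow, hkp.ne] using hoff p k hkp
  · exact (offDiagRow_eq_zero_of_le hM hpk).ge

end LowerTriangular

section Lyapunov

variable {ι R : Type*} [LinearOrder ι] [Field R] [LinearOrder R] [IsStrictOrderedRing R]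
  {M S C : Matrix ι ι R} [Fintype ι]

theorem IsLowerTriangular.diag_mul_le_mulVec (hM : M.IsLowerTriangular)
    (hoff : ∀ i j, j < i → 0 ≤ M i j) {x : ι → R} {i : ι} (hx : ∀ k < i, 0 ≤ x k) :
    M i i * x i ≤ (M *ᵥ x) i := by
  rw [mulVec, dotProduct, ← Finset.add_sum_erase _ _ (Finset.mem_univ i)]
  refine le_add_of_nonneg_right (Finset.sum_nonneg fun k hk => ?_)
  rcases lt_or_gt_of_ne (Finset.ne_of_mem_erase hk) with hki | hik
  · exact mul_nonneg (hoff i k hki) (hx k hki)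
  · simp [hM (show OrderDual.toDual k < OrderDual.toDual i from hik)]
theorem lyapunov_solution_nonneg (hM : M.IsLowerTriangular) (hoff : ∀ i j, j < i → 0 ≤ M i j)
    (hdiag : ∀ i, M i i < 0) (hC : ∀ i j, 0 ≤ C i j) (hS : M * S + S * Mᵀ + C = 0) :
    ∀ i j, 0 ≤ S i j := by
  intro i
  induction i using WellFoundedLT.induction with | _ i IHi
  intro j
  induction j using WellFoundedLT.induction with | _ j IHj
  have hMS : M i i * S i j ≤ (M * S) i j := hM.diag_mul_le_mulVec hoff fun k hk => IHi k hk j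
  have hSM : M j j * S i j ≤ (S * Mᵀ) i j := by
    simpa [mul_apply, mulVec, dotProduct, mul_comm] using
      hM.diag_mul_le_mulVec hoff (x := S i) fun k hk => IHj k hk
  have hij : (M * S) i j + (S * Mᵀ) i j + C i j = 0 := by simpa using congrFun₂ hS i j
  refine nonneg_of_mul_nonpos_right (a := M i i + M j j) ?_ (by linarith [hdiag i, hdiag j])
  linarith [hC i j]

theorem lyapunov_solution_unique {T : Matrix ι ι R} (hM : M.IsLowerTriangular)
    (hoff : ∀ i j, j < i → 0 ≤ M i j) (hdiag : ∀ i, M i i < 0)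
    (hS : M * S + S * Mᵀ + C = 0) (hT : M * T + T * Mᵀ + C = 0) : S = T := by
  have homogeneous : ∀ {A B : Matrix ι ι R}, M * A + A * Mᵀ + C = 0 →
      M * B + B * Mᵀ + C = 0 → M * (A - B) + (A - B) * Mᵀ + 0 = 0 := fun hA hB => by
    rw [mul_sub, sub_mul, add_zero, ← sub_eq_zero.mpr (hA.trans hB.symm)]; abel
  have hST := lyapunov_solution_nonneg hM hoff hdiag (fun _ _ => le_rfl) (homogeneous hS hT)
  have hTS := lyapunov_solution_nonneg hM hoff hdiag (fun _ _ => le_rfl) (homogeneous hT hS)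
  ext i j
  linarith [hST i j, hTS i j, sub_apply S T i j, sub_apply T S i j]

theorem lyapunov_solution_isSymm (hM : M.IsLowerTriangular) (hoff : ∀ i j, j < i → 0 ≤ M i j)
    (hdiag : ∀ i, M i i < 0) (hC : C.IsSymm) (hS : M * S + S * Mᵀ + C = 0) : S.IsSymm :=
  lyapunov_solution_unique hM hoff hdiag
    (by simpa [transpose_mul, hC.eq, add_comm] using congrArg transpose hS) hS

theorem lyapunov_offDiagRow_mul_mulVec_le (hM : M.IsLowerTriangular)
    (hoff : ∀ i j, j < i → 0 ≤ M i j) (hdiag : ∀ i, M i i ∈ Set.Ico (-1 : R) 0)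
    (hC : ∀ i j, 0 ≤ C i j) (hS : M * S + S * Mᵀ + C = 0) (p k : ι) :
    offDiagRow M p k * (S *ᵥ offDiagRow M p) k ≤ offDiagRow M p k * (2 * S k p) := by
  rcases lt_or_ge k p with hkp | hpk
  · refine mul_le_mul_of_nonneg_left ?_ (offDiagRow_nonneg hM hoff p k)
    have hnn := lyapunov_solution_nonneg hM hoff (fun i => (hdiag i).2) hC hS
    have hMS : M k k * S k p ≤ (M * S) k p := hM.diag_mul_le_mulVec hoff fun l _ => hnn l p
    have hkp_eq : (M * S) k p + (S *ᵥ M p) k + C k p = 0 := by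
      simpa [mul_apply, mulVec, dotProduct] using congrFun₂ hS k p
    rw [mulVec_row_eq_mulVec_offDiagRow_add] at hkp_eq
    linarith [mul_nonneg (by linarith [(hdiag k).1] : 0 ≤ M k k + 1) (hnn k p),
      mul_nonneg (by linarith [(hdiag p).1] : 0 ≤ M p p + 1) (hnn k p), hC k p]
  · simp [offDiagRow_eq_zero_of_le hM hpk]

theorem lyapunov_diag_lower_bound (hM : M.IsLowerTriangular)
    (hoff : ∀ i j, j < i → 0 ≤ M i j) (hdiag : ∀ i, M i i ∈ Set.Ico (-1 : R) 0)
    (hC : ∀ i j, 0 ≤ C i j) (hCsymm : C.IsSymm) (hS : M * S + S * Mᵀ + C = 0) (p : ι) :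
    -C p p / (2 * M p p) + 1 / 2 * (offDiagRow M p ⬝ᵥ S *ᵥ offDiagRow M p) ≤ S p p := by
  set v := offDiagRow M p
  have hsymm := lyapunov_solution_isSymm hM hoff (fun i => (hdiag i).2) hCsymm hS
  have hnn := lyapunov_solution_nonneg hM hoff (fun i => (hdiag i).2) hC hS
  have hP : 0 ≤ (S *ᵥ v) p :=
    Finset.sum_nonneg fun l _ => mul_nonneg (hnn p l) (offDiagRow_nonneg hM hoff p l)
  have hpp : 2 * (S *ᵥ v) p + 2 * M p p * S p p + C p p = 0 := by
    have hMS : (M * S) p p = (S *ᵥ M p) p := by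
      simp only [mul_apply, mulVec, dotProduct, hsymm.apply p, mul_comm]
    have hSM : (S * Mᵀ) p p = (S *ᵥ M p) p := rfl
    have hpp := congrFun₂ hS p p
    rw [add_apply, add_apply, hMS, hSM, mulVec_row_eq_mulVec_offDiagRow_add, zero_apply] at hpp
    linarith
  have hquad : v ⬝ᵥ S *ᵥ v ≤ 2 * (S *ᵥ v) p :=
    calc v ⬝ᵥ S *ᵥ v = ∑ k, v k * (S *ᵥ v) k := rfl
      _ ≤ ∑ k, v k * (2 * S k p) := Finset.sum_le_sum fun k _ =>
          lyapunov_offDiagRow_mul_mulVec_le hM hoff hdiag hC hS p k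
      _ = 2 * (S *ᵥ v) p := by
          simp only [mulVec, dotProduct, Finset.mul_sum, hsymm.apply p]
          exact Finset.sum_congr rfl fun k _ => by ring
  obtain ⟨ha1, ha0⟩ := hdiag p
  have hSpp : S p p = -C p p / (2 * M p p) + (S *ᵥ v) p / -M p p := by
    field_simp [ha0.ne]
    linarith
  rw [hSpp]
  have : (S *ᵥ v) p ≤ (S *ᵥ v) p / -M p p := by
    rw [le_div_iff₀ (by linarith)]
    nlinarith
  linarith

end Lyapunov

end Matrix

/-- Lower bound on the marginal variance of the last node for an acyclic model:
if `M` is lower triangular with diagonal in `[-1,0)` and nonnegative off-diagonal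
entries, and `C` is diagonal PSD, then `M` is stable and any solution of the
Lyapunov equation satisfies
`Σ_dd ≥ -C_dd/(2 M_dd) + (1/2) ∑_{i,j<d} M_di M_dj Σ_ij`. -/
theorem variance_lower_bound {n : ℕ} (M C : Matrix (Fin (n + 1)) (Fin (n + 1)) ℝ)
    (htri : ∀ i j : Fin (n + 1), i < j → M i j = 0)
    (hdiag : ∀ i, M i i ∈ Set.Ico (-1 : ℝ) 0)
    (hoff : ∀ i j : Fin (n + 1), j < i → 0 ≤ M i j)
    (hCdiag : ∀ i j : Fin (n + 1), i ≠ j → C i j = 0)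
    (hC : C.PosSemidef) :
    (∀ μ ∈ spectrum ℂ (M.map Complex.ofReal), μ.re < 0) ∧
      ∀ S : Matrix (Fin (n + 1)) (Fin (n + 1)) ℝ, M * S + S * Mᵀ + C = 0 →
        S (Fin.last n) (Fin.last n) ≥
          -C (Fin.last n) (Fin.last n) / (2 * M (Fin.last n) (Fin.last n)) +
            1 / 2 * ∑ i : Fin n, ∑ j : Fin n,
              M (Fin.last n) i.castSucc * M (Fin.last n) j.castSucc *
                S i.castSucc j.castSucc := by
  have hM : M.IsLowerTriangular := fun i j h => htri i j h
  refine ⟨fun μ hμ => ?_, fun S hS => ?_⟩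
  · have hMℂ : (M.map Complex.ofReal).IsLowerTriangular := fun i j h => by simp [hM h]
    obtain ⟨i, rfl⟩ := hMℂ.exists_diag_eq_of_mem_spectrum hμ
    simpa using (hdiag i).2
  · have hCnn : ∀ i j, 0 ≤ C i j := fun i j => by
      rcases eq_or_ne i j with rfl | hij
      exacts [hC.diag_nonneg, (hCdiag i j hij).ge]
    rw [ge_iff_le, ← offDiagRow_last_dotProduct_mulVec]
    exact lyapunov_diag_lower_bound hM hoff hdiag hCnn (IsDiag.isSymm hCdiag) hS _
end
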